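/- (Correctness of the lean second-order terms.) Let φ be an LTLf formula, ρ a finite trace, and Q an assignment of a set Q_{θa} of natural numbers to every U-subformula and R-subformula θa of φ such that Q_{θa} = {x : 0 ≤ x < |ρ| and ρ, x ⊨ θa}. Then for every subformula θ of φ and every x with 0 ≤ x < |ρ|: x ∈ lean(θ) if and only if ρ, x ⊨ θ. -/
import Mathlib


/-- Syntax of LTLf formulas over a set `P` of atomic propositions. -/
inductive LTLf (P : Type) : Type where
  | tt : LTLf P
  | ff : LTLf P
  | atom : P → LTLf P
  | not : LTLf P → LTLf P
  | and : LTLf P → LTLf P → LTLf P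
  | or : LTLf P → LTLf P → LTLf P
  | next : LTLf P → LTLf P
  | wnext : LTLf P → LTLf P
  | until_ : LTLf P → LTLf P → LTLf P
  | release : LTLf P → LTLf P → LTLf P

/-- Satisfaction `ρ, x ⊨ φ` of an LTLf formula on a finite trace
`ρ : List (Set P)` at position `x`. -/
def LTLf.Sat {P : Type} (ρ : List (Set P)) : LTLf P → ℕ → Prop
  | .tt, _ => True
  | .ff, _ => False
  | .atom p, x => p ∈ ρ.getD x ∅
  | .not φ, x => ¬ LTLf.Sat ρ φ x
  | .and φ₁ φ₂, x => LTLf.Sat ρ φ₁ x ∧ LTLf.Sat ρ φ₂ x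
  | .or φ₁ φ₂, x => LTLf.Sat ρ φ₁ x ∨ LTLf.Sat ρ φ₂ x
  | .next φ, x => x + 1 < ρ.length ∧ LTLf.Sat ρ φ (x + 1)
  | .wnext φ, x => x + 1 = ρ.length ∨ LTLf.Sat ρ φ (x + 1)
  | .until_ φ₁ φ₂, x => ∃ y, x ≤ y ∧ y < ρ.length ∧ LTLf.Sat ρ φ₂ y ∧
      ∀ z, x ≤ z → z < y → LTLf.Sat ρ φ₁ z
  | .release φ₁ φ₂, x => ∀ y, x ≤ y → y < ρ.length →
      (LTLf.Sat ρ φ₂ y ∨ ∃ z, x ≤ z ∧ z < y ∧ LTLf.Sat ρ φ₁ z)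

/-- `Subf θ φ`: `θ` is a subformula of `φ`. -/
inductive Subf {P : Type} : LTLf P → LTLf P → Prop where
  | refl (φ : LTLf P) : Subf φ φ
  | not_ {θ φ : LTLf P} : Subf θ φ → Subf θ (.not φ)
  | and_left {θ φ₁ φ₂ : LTLf P} : Subf θ φ₁ → Subf θ (.and φ₁ φ₂)
  | and_right {θ φ₁ φ₂ : LTLf P} : Subf θ φ₂ → Subf θ (.and φ₁ φ₂)
  | or_left {θ φ₁ φ₂ : LTLf P} : Subf θ φ₁ → Subf θ (.or φ₁ φ₂)
  | or_right {θ φ₁ φ₂ : LTLf P} : Subf θ φ₂ → Subf θ (.or φ₁ φ₂)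
  | next_ {θ φ : LTLf P} : Subf θ φ → Subf θ (.next φ)
  | wnext_ {θ φ : LTLf P} : Subf θ φ → Subf θ (.wnext φ)
  | until_left {θ φ₁ φ₂ : LTLf P} : Subf θ φ₁ → Subf θ (.until_ φ₁ φ₂)
  | until_right {θ φ₁ φ₂ : LTLf P} : Subf θ φ₂ → Subf θ (.until_ φ₁ φ₂)
  | release_left {θ φ₁ φ₂ : LTLf P} : Subf θ φ₁ → Subf θ (.release φ₁ φ₂)
  | release_right {θ φ₁ φ₂ : LTLf P} : Subf θ φ₂ → Subf θ (.release φ₁ φ₂)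

/-- `θ` is a `U`-subformula or an `R`-subformula (i.e. its top connective is
Until or Release). -/
def IsUR {P : Type} : LTLf P → Prop
  | .until_ _ _ => True
  | .release _ _ => True
  | _ => False

/-- The lean second-order term `lean(θ)`: the set of positions associated to
`θ`, built from the trace `ρ` and the assignment `Q` of sets to `U`- and
`R`-subformulas. -/
def leanSet {P : Type} (ρ : List (Set P)) (Q : LTLf P → Set ℕ) :
    LTLf P → Set ℕ
  | .tt => {x | x < ρ.length}
  | .ff => ∅
  | .atom p => {x | x < ρ.length ∧ p ∈ ρ.getD x ∅}
  | .not θj => {x | x < ρ.length} \ leanSet ρ Q θj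
  | .and θj θk => leanSet ρ Q θj ∩ leanSet ρ Q θk
  | .or θj θk => leanSet ρ Q θj ∪ leanSet ρ Q θk
  | .next θj => {x | x + 1 ∈ leanSet ρ Q θj} \ {ρ.length - 1}
  | .wnext θj => {x | x + 1 ∈ leanSet ρ Q θj} ∪ {ρ.length - 1}
  | .until_ θj θk => Q (.until_ θj θk)
  | .release θj θk => Q (.release θj θk)


theorem Subf.trans {P : Type} {a b c : LTLf P} (h1 : Subf a b) (h2 : Subf b c) :
    Subf a c := by
  induction h2 with
  | refl => exact h1
  | not_ _ ih => exact .not_ ih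
  | and_left _ ih => exact .and_left ih
  | and_right _ ih => exact .and_right ih
  | or_left _ ih => exact .or_left ih
  | or_right _ ih => exact .or_right ih
  | next_ _ ih => exact .next_ ih
  | wnext_ _ ih => exact .wnext_ ih
  | until_left _ ih => exact .until_left ih
  | until_right _ ih => exact .until_right ih
  | release_left _ ih => exact .release_left ih
  | release_right _ ih => exact .release_right ih

theorem leanSet_bounded {P : Type} (φ : LTLf P) (ρ : List (Set P))
    (Q : LTLf P → Set ℕ)
    (hQ : ∀ θa : LTLf P, Subf θa φ → IsUR θa →
      Q θa = {x | x < ρ.length ∧ LTLf.Sat ρ θa x})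
    (hρ : 0 < ρ.length) :
    ∀ θ : LTLf P, Subf θ φ → ∀ x : ℕ, x ∈ leanSet ρ Q θ → x < ρ.length := by
  intro θ
  induction θ with
  | tt => intro _ x hx; exact hx
  | ff => intro _ x hx; exact absurd hx (Set.notMem_empty x)
  | atom p => intro _ x hx; exact hx.1
  | not θj ihj => intro _ x hx; exact hx.1
  | and θj θk ihj ihk =>
      intro h x hx
      exact ihj (Subf.trans (.refl _) (Subf.trans (.and_left (.refl _)) h)) x hx.1
  | or θj θk ihj ihk =>
      intro h x hx
      cases hx with
      | inl hx => exact ihj (Subf.trans (.or_left (.refl _)) h) x hx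
      | inr hx => exact ihk (Subf.trans (.or_right (.refl _)) h) x hx
  | next θj ihj =>
      intro h x hx
      have := ihj (Subf.trans (.next_ (.refl _)) h) (x + 1) hx.1
      omega
  | wnext θj ihj =>
      intro h x hx
      cases hx with
      | inl hx =>
          have := ihj (Subf.trans (.wnext_ (.refl _)) h) (x + 1) hx
          omega
      | inr hx => simp only [Set.mem_singleton_iff] at hx; omega
  | until_ θj θk ihj ihk =>
      intro h x hx
      rw [show leanSet ρ Q (.until_ θj θk) = Q (.until_ θj θk) from rfl,
        hQ _ h trivial] at hx
      exact hx.1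
  | release θj θk ihj ihk =>
      intro h x hx
      rw [show leanSet ρ Q (.release θj θk) = Q (.release θj θk) from rfl,
        hQ _ h trivial] at hx
      exact hx.1

/-- Correctness of the lean second-order terms: if `Q` assigns to every `U`-
and `R`-subformula of `φ` the set of positions where it holds, then for every
subformula `θ` of `φ`, `lean(θ)` is the set of positions where `θ` holds. -/
theorem lean_terms_correct {P : Type} (φ : LTLf P) (ρ : List (Set P))
    (Q : LTLf P → Set ℕ)
    (hQ : ∀ θa : LTLf P, Subf θa φ → IsUR θa →
      Q θa = {x | x < ρ.length ∧ LTLf.Sat ρ θa x}) :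
    ∀ θ : LTLf P, Subf θ φ → ∀ x : ℕ, x < ρ.length →
      (x ∈ leanSet ρ Q θ ↔ LTLf.Sat ρ θ x) := by
  
  intro θ
  induction θ with
  | tt => intro _ x hx; simp [leanSet, LTLf.Sat, hx]
  | ff => intro _ x hx; simp [leanSet, LTLf.Sat]
  | atom p => intro _ x hx; simp [leanSet, LTLf.Sat, hx]
  | not θj ihj =>
      intro h x hx
      have := ihj (Subf.trans (.not_ (.refl _)) h) x hx
      simp only [leanSet, LTLf.Sat, Set.mem_diff, Set.mem_setOf_eq]
      tauto
  | and θj θk ihj ihk =>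
      intro h x hx
      have h1 := ihj (Subf.trans (.and_left (.refl _)) h) x hx
      have h2 := ihk (Subf.trans (.and_right (.refl _)) h) x hx
      simp only [leanSet, LTLf.Sat, Set.mem_inter_iff]
      tauto
  | or θj θk ihj ihk =>
      intro h x hx
      have h1 := ihj (Subf.trans (.or_left (.refl _)) h) x hx
      have h2 := ihk (Subf.trans (.or_right (.refl _)) h) x hx
      simp only [leanSet, LTLf.Sat, Set.mem_union]
      tauto
  | next θj ihj =>
      intro h x hx
      have hsub := Subf.trans (.next_ (.refl (P := P) θj)) h
      simp only [leanSet, LTLf.Sat, Set.mem_diff, Set.mem_setOf_eq,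
        Set.mem_singleton_iff]
      constructor
      · rintro ⟨h1, h2⟩
        have hlt : x + 1 < ρ.length := by omega
        exact ⟨hlt, (ihj hsub (x + 1) hlt).mp h1⟩
      · rintro ⟨h1, h2⟩
        exact ⟨(ihj hsub (x + 1) h1).mpr h2, by omega⟩
  | wnext θj ihj =>
      intro h x hx
      have hsub := Subf.trans (.wnext_ (.refl (P := P) θj)) h
      simp only [leanSet, LTLf.Sat, Set.mem_union, Set.mem_setOf_eq,
        Set.mem_singleton_iff]
      constructor
      · rintro (h1 | h1)
        · have hlt : x + 1 < ρ.length :=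
            leanSet_bounded φ ρ Q hQ (by omega) θj hsub (x + 1) h1
          exact Or.inr ((ihj hsub (x + 1) hlt).mp h1)
        · left; omega
      · rintro (h1 | h1)
        · right; omega
        · by_cases hlt : x + 1 < ρ.length
          · exact Or.inl ((ihj hsub (x + 1) hlt).mpr h1)
          · right; omega
  | until_ θj θk ihj ihk =>
      intro h x hx
      rw [show leanSet ρ Q (.until_ θj θk) = Q (.until_ θj θk) from rfl,
        hQ _ h trivial]
      simp [hx]
  | release θj θk ihj ihk =>
      intro h x hx
      rw [show leanSet ρ Q (.release θj θk) = Q (.release θj θk) from rfl,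
        hQ _ h trivial]
      simp [hx]
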